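/- arXiv:2108.05581 — 10 statements merged into one kernel-verified Lean document; each statement's English description precedes it below -/
import Mathlib

section
/- Let a_0 < a_1 < ... < a_n be positive integers with gcd 1, and let t be a nonnegative integer. If there exists x ∈ ℤ_{≥0}^{n+1} with a_0·x_0 + a_1·x_1 + ... + a_n·x_n = t, then there exists such a solution x additionally satisfying ∏_{i=1}^{n} (x_i + 1) ≤ a_0. -/
/-!
Write the equation as `a₀ x₀ + b ⬝ᵥ x = t` with `b = (a₁, …, aₙ)` and take a solution whose
tail `x` is minimal for the order comparing `b ⬝ᵥ x` first and breaking ties lexicographically.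
If two distinct points `y' < y` of the box `0 ≤ y ≤ x` had `b ⬝ᵥ y ≡ b ⬝ᵥ y' (mod a₀)`, then
`x - y + y'` would again be the tail of a solution (the difference `b ⬝ᵥ y - b ⬝ᵥ y'` is
absorbed by `x₀`), and a smaller one, because the order is translation invariant. Hence
`y ↦ b ⬝ᵥ y % a₀` is injective on the box, which has `∏ (xᵢ + 1)` points.
-/

open Finset

namespace LinearDiophantine

variable {ι : Type*} [Fintype ι]

lemma exists_solution_of_add_eq {m t x₀ : ℕ} {b x y y' w : ι → ℕ}
    (hsol : m * x₀ + b ⬝ᵥ x = t) (hexch : w + y = x + y')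
    (hle : b ⬝ᵥ y' ≤ b ⬝ᵥ y) (hdvd : m ∣ b ⬝ᵥ y - b ⬝ᵥ y') :
    ∃ w₀, m * w₀ + b ⬝ᵥ w = t := by
  have hsum : b ⬝ᵥ w + b ⬝ᵥ y = b ⬝ᵥ x + b ⬝ᵥ y' := by
    rw [← dotProduct_add, ← dotProduct_add, hexch]
  refine ⟨x₀ + (b ⬝ᵥ y - b ⬝ᵥ y') / m, ?_⟩
  rw [mul_add, Nat.mul_div_cancel' hdvd]
  omega

def weightLex (b x : ι → ℕ) : ℕ ×ₗ Lex (ι → ℕ) := toLex (b ⬝ᵥ x, toLex x)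

lemma weightLex_add (b x y : ι → ℕ) : weightLex b (x + y) = weightLex b x + weightLex b y := by
  simp only [weightLex, dotProduct_add]
  rfl

lemma weightLex_injective (b : ι → ℕ) : Function.Injective (weightLex b) := fun x y h => by
  simpa [weightLex] using congrArg (fun k => (ofLex k).2) h

section LinearOrder

variable [LinearOrder ι]

lemma injOn_dotProduct_mod_of_weightLex_minimal {m t x₀ : ℕ} {b x : ι → ℕ}
    (hsol : m * x₀ + b ⬝ᵥ x = t)
    (hmin : ∀ y₀ y, m * y₀ + b ⬝ᵥ y = t → weightLex b x ≤ weightLex b y) :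
    Set.InjOn (fun y => b ⬝ᵥ y % m) (Fintype.piFinset fun i => range (x i + 1)) := by
  suffices h : ∀ y ∈ Fintype.piFinset (fun i => range (x i + 1)), ∀ y',
      b ⬝ᵥ y % m = b ⬝ᵥ y' % m → ¬ weightLex b y' < weightLex b y by
    intro y hy y' hy' hmod
    refine weightLex_injective b (le_antisymm ?_ ?_)
    · exact not_lt.mp (h y hy y' hmod)
    · exact not_lt.mp (h y' hy' y hmod.symm)
  intro y hy y' hmod hlt
  have hyx : y ≤ x := fun i => Nat.lt_succ_iff.mp (mem_range.mp (Fintype.mem_piFinset.mp hy i))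
  have hle : b ⬝ᵥ y' ≤ b ⬝ᵥ y := by
    simpa [weightLex] using Prod.Lex.monotone_fst _ _ hlt.le
  have hexch : (x - y + y') + y = x + y' := by
    rw [add_right_comm, tsub_add_cancel_of_le hyx]
  obtain ⟨w₀, hw⟩ := exists_solution_of_add_eq hsol hexch hle
    (Nat.dvd_of_mod_eq_zero (Nat.sub_mod_eq_zero_of_mod_eq hmod))
  have hsmaller : weightLex b (x - y + y') + weightLex b y < weightLex b x + weightLex b y := by
    rw [← weightLex_add, ← weightLex_add, hexch, weightLex_add, weightLex_add]
    exact add_lt_add_right hlt _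
  exact (lt_of_add_lt_add_right hsmaller).not_ge (hmin w₀ _ hw)

end LinearOrder

theorem exists_solution_prod_le {m t : ℕ} (hm : 0 < m) (b : ι → ℕ)
    (hfeas : ∃ x₀ x, m * x₀ + b ⬝ᵥ x = t) :
    ∃ x₀ x, m * x₀ + b ⬝ᵥ x = t ∧ ∏ i, (x i + 1) ≤ m := by
  let _ : LinearOrder ι := LinearOrder.lift' _ (Fintype.equivFin ι).injective
  obtain ⟨x, ⟨x₀, hsol⟩, hmin⟩ := exists_minimalFor_of_wellFoundedLT
    (fun x => ∃ x₀, m * x₀ + b ⬝ᵥ x = t) (weightLex b)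
    (let ⟨x₀, x, h⟩ := hfeas; ⟨x, x₀, h⟩)
  have hinj := injOn_dotProduct_mod_of_weightLex_minimal hsol
    fun y₀ y hy => (le_total _ _).elim id (hmin ⟨y₀, hy⟩)
  refine ⟨x₀, x, hsol, ?_⟩
  simpa using card_le_card_of_injOn _ (fun y _ => mem_range.mpr (Nat.mod_lt _ hm)) hinj

end LinearDiophantine

theorem Fin.prod_univ_erase_zero {M : Type*} [CommMonoid M] {n : ℕ} (f : Fin (n + 1) → M) :
    ∏ i ∈ univ.erase 0, f i = ∏ i : Fin n, f i.succ := by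
  rw [Fin.univ_succ, erase_cons, prod_map]
  rfl

theorem stmt_0_general (n : ℕ) (a : Fin (n + 1) → ℕ) (t : ℕ)
    (hpos : 0 < a 0)
    (hfeas : ∃ x : Fin (n + 1) → ℕ, ∑ i, a i * x i = t) :
    ∃ x : Fin (n + 1) → ℕ, (∑ i, a i * x i = t) ∧
      ∏ i ∈ Finset.univ.erase 0, (x i + 1) ≤ a 0 := by
  obtain ⟨x, hx⟩ := hfeas
  obtain ⟨y₀, y, hy, hprod⟩ := LinearDiophantine.exists_solution_prod_le hpos (a ∘ Fin.succ)
    ⟨x 0, x ∘ Fin.succ, by simpa [Fin.sum_univ_succ, dotProduct] using hx⟩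
  refine ⟨Fin.cons y₀ y, by simpa [Fin.sum_univ_succ, dotProduct] using hy, ?_⟩
  simpa [Fin.prod_univ_erase_zero] using hprod

theorem stmt_0 (n : ℕ) (a : Fin (n + 1) → ℕ) (t : ℕ)
    (hmono : StrictMono a) (hpos : 0 < a 0)
    (hgcd : Finset.univ.gcd a = 1)
    (hfeas : ∃ x : Fin (n + 1) → ℕ, ∑ i, a i * x i = t) :
    ∃ x : Fin (n + 1) → ℕ, (∑ i, a i * x i = t) ∧
      ∏ i ∈ Finset.univ.erase 0, (x i + 1) ≤ a 0 :=
  stmt_0_general n a t hpos hfeas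
end

section
/- Let a_0 < a_1 < ... < a_n be positive integers and t a nonnegative integer. If the equation a_0·x_0 + ... + a_n·x_n = t has a nonnegative integer solution, then it has a nonnegative integer solution x whose support (set of indices i with x_i ≠ 0) has cardinality at most log₂(a_0) + 1. -/
/-! Take a solution `x` of least support, ties broken in favour of `x i₀ ≠ 0`. If its support
had more than `log₂ aᵢ₀ + 1` elements, the `2 ^ (#support - 1) > aᵢ₀` subset sums of the terms
`aᵢ xᵢ`, `i ≠ i₀`, could not have distinct residues mod `aᵢ₀`. Two subsets with equal residues give
disjoint `U`, `V` with `∑_U aᵢ xᵢ = ∑_V aᵢ xᵢ + aᵢ₀ k`; emptying `U`, doubling `V` and adding `k`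
to `xᵢ₀` then yields a solution that beats `x`. -/

open Finset

namespace LinearDiophantine

variable {ι : Type*} [DecidableEq ι]

theorem exists_disjoint_ne_sum_modEq (D : Finset ι) (f : ι → ℕ) {m : ℕ} (hm0 : 0 < m)
    (hm : m < 2 ^ #D) :
    ∃ U ⊆ D, ∃ V ⊆ D, Disjoint U V ∧ U ≠ V ∧ ∑ i ∈ U, f i ≡ ∑ i ∈ V, f i [MOD m] := by
  obtain ⟨S, hS, T, hT, hne, hmod⟩ :=
    exists_ne_map_eq_of_card_lt_of_maps_to (t := range m) (s := D.powerset)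
      (f := fun S => (∑ i ∈ S, f i) % m) (by simpa using hm)
      (fun _ _ => mem_coe.2 (mem_range.2 (Nat.mod_lt _ hm0)))
  refine ⟨S \ T, sdiff_subset.trans (mem_powerset.1 hS), T \ S,
    sdiff_subset.trans (mem_powerset.1 hT), disjoint_sdiff_sdiff, ?_, ?_⟩
  · intro h
    have hST : S \ T = ∅ := by
      simpa [← h] using (disjoint_sdiff_sdiff : Disjoint (S \ T) (T \ S))
    exact hne (subset_antisymm (sdiff_eq_empty_iff_subset.1 hST)
      (sdiff_eq_empty_iff_subset.1 (h ▸ hST)))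
  · refine Nat.ModEq.add_right_cancel' (∑ i ∈ S ∩ T, f i) ?_
    rwa [add_comm, sum_inter_add_sum_sdiff, inter_comm, add_comm, sum_inter_add_sum_sdiff]

theorem exists_disjoint_sum_eq_add_mul (D : Finset ι) (f : ι → ℕ) {m : ℕ} (hm0 : 0 < m)
    (hm : m < 2 ^ #D) :
    ∃ U ⊆ D, ∃ V ⊆ D, Disjoint U V ∧ U.Nonempty ∧
      ∃ k, ∑ i ∈ U, f i = ∑ i ∈ V, f i + m * k := by
  obtain ⟨U, hU, V, hV, hdisj, hne, hmod⟩ := exists_disjoint_ne_sum_modEq D f hm0 hm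
  wlog hle : ∑ i ∈ V, f i ≤ ∑ i ∈ U, f i generalizing U V
  · exact this V hV U hU hdisj.symm hne.symm hmod.symm (le_of_not_ge hle)
  obtain ⟨k, hk⟩ := (Nat.modEq_iff_dvd' hle).1 hmod.symm
  rcases U.eq_empty_or_nonempty with rfl | hUne
  · -- both sums vanish, so the roles of `U` and `V` can be swapped
    have hV0 : ∑ i ∈ V, f i = 0 := by simpa using hle
    exact ⟨V, hV, ∅, empty_subset D, disjoint_empty_right V,
      nonempty_iff_ne_empty.2 hne.symm, 0, by simp [hV0]⟩
  · exact ⟨U, hU, V, hV, hdisj, hUne, k, by omega⟩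

/-- Twice `#S`, plus one if `i₀ ∉ S`: raising `x i₀` may add `i₀` to the support, and this
weight still decreases when it does so at the cost of another index. -/
def weight (i₀ : ι) (S : Finset ι) : ℕ := #S + #(insert i₀ S)

theorem weight_lt_of_subset_insert_sdiff {i₀ : ι} {S T U : Finset ι} (hU : U.Nonempty)
    (hUS : U ⊆ S.erase i₀) (hT : T ⊆ insert i₀ (S \ U)) : weight i₀ T < weight i₀ S := by
  have hi₀ : i₀ ∉ U := fun h => notMem_erase i₀ S (hUS h)
  have hUS' : U ⊆ insert i₀ S := hUS.trans ((erase_subset _ _).trans (subset_insert _ _))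
  have hsub : insert i₀ T ⊆ insert i₀ S \ U := by
    rw [insert_sdiff_of_notMem _ hi₀]
    exact insert_subset (mem_insert_self _ _) hT
  have hlt : #(insert i₀ T) < #(insert i₀ S) :=
    card_lt_card (hsub.trans_ssubset (sdiff_ssubset hUS' hU))
  have hle : #T ≤ #S :=
    calc #T ≤ #(insert i₀ S \ U) := card_le_card ((subset_insert i₀ T).trans hsub)
      _ = #(insert i₀ S) - #U := card_sdiff_of_subset hUS'
      _ ≤ #S := by have := card_insert_le i₀ S; have := hU.card_pos; omega
  unfold weight
  omega

variable [Fintype ι]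

def support (x : ι → ℕ) : Finset ι := {i | x i ≠ 0}

def exchange (x : ι → ℕ) (i₀ : ι) (k : ℕ) (U V : Finset ι) : ι → ℕ := fun i =>
  if i = i₀ then x i + k else if i ∈ U then 0 else if i ∈ V then 2 * x i else x i

theorem sum_mul_exchange (a x : ι → ℕ) {i₀ : ι} {k : ℕ} {U V : Finset ι} (hU : i₀ ∉ U)
    (hV : i₀ ∉ V) (hdisj : Disjoint U V)
    (hk : ∑ i ∈ U, a i * x i = ∑ i ∈ V, a i * x i + a i₀ * k) :
    ∑ i, a i * exchange x i₀ k U V i = ∑ i, a i * x i := by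
  have hpt : ∀ i, a i * exchange x i₀ k U V i + (if i ∈ U then a i * x i else 0) =
      a i * x i + (if i ∈ V then a i * x i else 0) + (if i₀ = i then a i₀ * k else 0) := by
    intro i
    unfold exchange
    split_ifs <;> subst_vars <;> simp_all [disjoint_left] <;> ring
  have hsum := sum_congr rfl (fun i (_ : i ∈ univ) => hpt i)
  simp only [sum_add_distrib, sum_ite_mem, univ_inter, sum_ite_eq, mem_univ, if_true] at hsum
  omega

theorem support_exchange_subset (x : ι → ℕ) (i₀ : ι) (k : ℕ) (U V : Finset ι) :
    support (exchange x i₀ k U V) ⊆ insert i₀ (support x \ U) := by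
  intro i hi
  simp only [support, mem_filter_univ, mem_insert, mem_sdiff] at hi ⊢
  unfold exchange at hi
  split_ifs at hi <;> simp_all

theorem exists_sum_eq_weight_support_lt (a x : ι → ℕ) {i₀ : ι} (h0 : 0 < a i₀)
    (h : a i₀ < 2 ^ #((support x).erase i₀)) :
    ∃ y, ∑ i, a i * y i = ∑ i, a i * x i ∧ weight i₀ (support y) < weight i₀ (support x) := by
  obtain ⟨U, hU, V, hV, hdisj, hUne, k, hk⟩ :=
    exists_disjoint_sum_eq_add_mul _ (fun i => a i * x i) h0 h
  have hi₀ : ∀ W ⊆ (support x).erase i₀, i₀ ∉ W := fun W hW h => notMem_erase i₀ _ (hW h)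
  exact ⟨exchange x i₀ k U V, sum_mul_exchange a x (hi₀ U hU) (hi₀ V hV) hdisj hk,
    weight_lt_of_subset_insert_sdiff hUne hU (support_exchange_subset x i₀ k U V)⟩

theorem exists_sum_eq_card_support_le_log (a x : ι → ℕ) {i₀ : ι} (h0 : 0 < a i₀) :
    ∃ y, ∑ i, a i * y i = ∑ i, a i * x i ∧ #(support y) ≤ Nat.log 2 (a i₀) + 1 := by
  obtain ⟨y, hy, hmin⟩ := (measure fun y => weight i₀ (support y)).wf.has_min
    {y | ∑ i, a i * y i = ∑ i, a i * x i} ⟨x, rfl⟩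
  refine ⟨y, hy, not_lt.1 fun hlog => ?_⟩
  have hpow : a i₀ < 2 ^ #((support y).erase i₀) := by
    refine Nat.lt_pow_of_log_lt one_lt_two ?_
    have := pred_card_le_card_erase (a := i₀) (s := support y)
    omega
  obtain ⟨z, hz, hlt⟩ := exists_sum_eq_weight_support_lt a y h0 hpow
  exact hmin z (hz.trans hy) hlt

end LinearDiophantine

theorem stmt_1_general (n : ℕ) (a : Fin (n + 1) → ℕ) (t : ℕ)
    (hpos : 0 < a 0)
    (hfeas : ∃ x : Fin (n + 1) → ℕ, ∑ i, a i * x i = t) :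
    ∃ x : Fin (n + 1) → ℕ, (∑ i, a i * x i = t) ∧
      ((Finset.univ.filter fun i => x i ≠ 0).card : ℝ) ≤ Real.logb 2 (a 0) + 1 := by
  obtain ⟨x, rfl⟩ := hfeas
  obtain ⟨y, hy, hcard⟩ := LinearDiophantine.exists_sum_eq_card_support_le_log a x hpos
  refine ⟨y, hy, ?_⟩
  calc (#(LinearDiophantine.support y) : ℝ) ≤ Nat.log 2 (a 0) + 1 := by exact_mod_cast hcard
    _ ≤ Real.logb 2 (a 0) + 1 := by
      gcongr
      exact_mod_cast Real.natLog_le_logb (a 0) 2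

theorem stmt_1 (n : ℕ) (a : Fin (n + 1) → ℕ) (t : ℕ)
    (hmono : StrictMono a) (hpos : 0 < a 0)
    (hfeas : ∃ x : Fin (n + 1) → ℕ, ∑ i, a i * x i = t) :
    ∃ x : Fin (n + 1) → ℕ, (∑ i, a i * x i = t) ∧
      ((Finset.univ.filter fun i => x i ≠ 0).card : ℝ) ≤ Real.logb 2 (a 0) + 1 :=
  stmt_1_general n a t hpos hfeas
end

section
/- Let a_0, ..., a_n be positive integers with gcd 1 and a_0 smallest. Suppose t ≡ i (mod a_0) and t ≥ a[i], where a[i] is the minimum nonnegative integer congruent to i mod a_0 that is representable as a nonnegative integer combination of a_0, ..., a_n. Then t itself is representable as a nonnegative integer combination of a_0, ..., a_n. -/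
theorem exists_sum_mul_eq_add_mul {ι : Type*} [Fintype ι] {a : ι → ℕ} {m : ℕ}
    (hm : ∃ x : ι → ℕ, ∑ k, a k * x k = m) (j : ι) (c : ℕ) :
    ∃ x : ι → ℕ, ∑ k, a k * x k = m + a j * c := by
  classical
  obtain ⟨x, rfl⟩ := hm
  refine ⟨x + Pi.single j c, ?_⟩
  simp only [Pi.add_apply, mul_add, Finset.sum_add_distrib, Pi.single_apply, mul_ite, mul_zero,
    Finset.sum_ite_eq', Finset.mem_univ, if_true]

theorem exists_sum_mul_eq_of_modEq {ι : Type*} [Fintype ι] {a : ι → ℕ} {m t : ℕ} {j : ι}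
    (hm : ∃ x : ι → ℕ, ∑ k, a k * x k = m) (hmod : m ≡ t [MOD a j]) (hle : m ≤ t) :
    ∃ x : ι → ℕ, ∑ k, a k * x k = t := by
  obtain ⟨c, hc⟩ := (Nat.modEq_iff_dvd' hle).mp hmod
  have ht : t = m + a j * c := by omega
  exact ht ▸ exists_sum_mul_eq_add_mul hm j c

theorem stmt_2_general (n : ℕ) (a : Fin (n + 1) → ℕ)
    (i t ai : ℕ)
    (hmin : IsLeast {m : ℕ | m % a 0 = i ∧ ∃ x : Fin (n + 1) → ℕ, ∑ k, a k * x k = m} ai)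
    (ht : t % a 0 = i) (hge : ai ≤ t) :
    ∃ x : Fin (n + 1) → ℕ, ∑ k, a k * x k = t := by
  obtain ⟨⟨hai, hrep⟩, -⟩ := hmin
  exact exists_sum_mul_eq_of_modEq hrep (hai.trans ht.symm) hge

theorem stmt_2 (n : ℕ) (a : Fin (n + 1) → ℕ) (hmono : StrictMono a) (hpos : 0 < a 0)
    (hgcd : Finset.univ.gcd a = 1)
    (i t ai : ℕ) (hi : i < a 0)
    (hmin : IsLeast {m : ℕ | m % a 0 = i ∧ ∃ x : Fin (n + 1) → ℕ, ∑ k, a k * x k = m} ai)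
    (ht : t % a 0 = i) (hge : ai ≤ t) :
    ∃ x : Fin (n + 1) → ℕ, ∑ k, a k * x k = t :=
  stmt_2_general n a i t ai hmin ht hge
end

section
/- Let a_0, ..., a_n be positive integers with gcd 1 and a_0 smallest, and let a[i] (for 0 ≤ i < a_0) denote the minimal feasible target value congruent to i mod a_0. Then the Frobenius number (the largest nonfeasible nonnegative integer) equals max_i a[i] − a_0. -/
/-!
Feasible targets are closed under adding `a 0`, so in the residue class `i` modulo `a 0` they are
exactly the numbers `≥ b i`. The largest nonfeasible number of that class is therefore
`b i - a 0` (when `b i ≥ a 0`), and `F` is the largest of these.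
-/

open Finset

def feasible {ι : Type*} [Fintype ι] (a : ι → ℕ) : Set ℕ :=
  {t | ∃ x : ι → ℕ, ∑ j, a j * x j = t}

theorem add_mul_mem_feasible {ι : Type*} [Fintype ι] [DecidableEq ι] (a : ι → ℕ) (i : ι)
    {m : ℕ} (hm : m ∈ feasible a) (k : ℕ) : m + a i * k ∈ feasible a := by
  obtain ⟨x, rfl⟩ := hm
  refine ⟨x + Pi.single i k, ?_⟩
  simp [mul_add, sum_add_distrib, Pi.single_apply]

section ResidueMinima

variable {S : Set ℕ} {d : ℕ}

theorem add_le_of_notMem_of_isLeast (hS : ∀ m ∈ S, ∀ k, m + d * k ∈ S) {t c : ℕ} (ht : t ∉ S)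
    (hc : IsLeast {m | m % d = t % d ∧ m ∈ S} c) : t + d ≤ c := by
  obtain ⟨⟨hct, hcS⟩, -⟩ := hc
  have hlt : t < c := by
    by_contra! hle
    obtain ⟨k, hk⟩ := (Nat.modEq_iff_dvd' hle).mp hct
    exact ht (by simpa [← hk, Nat.add_sub_cancel' hle] using hS c hcS k)
  obtain ⟨k, hk⟩ := (Nat.modEq_iff_dvd' hlt.le).mp hct.symm
  rcases k with _ | k
  · omega
  · rw [mul_add_one] at hk
    omega

theorem sub_notMem_of_isLeast (hd : 0 < d) {i c : ℕ} (hc : IsLeast {m | m % d = i ∧ m ∈ S} c)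
    (hdc : d ≤ c) : c - d ∉ S := by
  intro hS
  have hmod : (c - d) % d = i := by
    rw [← hc.1.1, ← Nat.sub_add_cancel hdc, Nat.add_sub_cancel, Nat.add_mod_right]
  have := hc.2 ⟨hmod, hS⟩
  omega

end ResidueMinima

theorem stmt_3_general (n : ℕ) (a : Fin (n + 1) → ℕ) (hpos : 0 < a 0)
    (b : ℕ → ℕ)
    (hb : ∀ i < a 0,
      IsLeast {m : ℕ | m % a 0 = i ∧ ∃ x : Fin (n + 1) → ℕ, ∑ k, a k * x k = m} (b i))
    (F : ℕ)
    (hF : IsGreatest {t : ℕ | ¬ ∃ x : Fin (n + 1) → ℕ, ∑ k, a k * x k = t} F) :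
    F + a 0 = (Finset.range (a 0)).sup b := by
  have hS : ∀ m ∈ feasible a, ∀ k, m + a 0 * k ∈ feasible a :=
    fun _ => add_mul_mem_feasible a 0
  apply le_antisymm
  · have hres : F % a 0 < a 0 := Nat.mod_lt _ hpos
    exact (add_le_of_notMem_of_isLeast hS hF.1 (hb _ hres)).trans
      (le_sup (mem_range.mpr hres))
  · refine Finset.sup_le fun i hi => ?_
    have hbi := hb i (mem_range.mp hi)
    by_cases hle : a 0 ≤ b i
    · have := hF.2 (sub_notMem_of_isLeast hpos hbi hle)
      omega
    · omega

theorem stmt_3 (n : ℕ) (a : Fin (n + 1) → ℕ) (hmono : StrictMono a) (hpos : 0 < a 0)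
    (hgcd : Finset.univ.gcd a = 1)
    (b : ℕ → ℕ)
    (hb : ∀ i < a 0,
      IsLeast {m : ℕ | m % a 0 = i ∧ ∃ x : Fin (n + 1) → ℕ, ∑ k, a k * x k = m} (b i))
    (F : ℕ)
    (hF : IsGreatest {t : ℕ | ¬ ∃ x : Fin (n + 1) → ℕ, ∑ k, a k * x k = t} F) :
    F + a 0 = (Finset.range (a 0)).sup b :=
  stmt_3_general n a hpos b hb F hF
end

section
/- Let a_0 < ... < a_n be positive integers with gcd 1, and let A^(j) denote the set of feasible target values in the interval ((j−1)a_n, j·a_n]. Then the sequence of cardinalities |A^(j)| is monotonically nondecreasing in j; moreover if |A^(j)| = a_n for some j (i.e., every integer in that interval is feasible), then |A^(k)| = a_n for all k ≥ j. -/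
/-- `t` is a nonnegative integer combination of `a 0, …, a n`. -/
def Feasible (n : ℕ) (a : Fin (n + 1) → ℕ) (t : ℕ) : Prop :=
  ∃ x : Fin (n + 1) → ℕ, ∑ i, a i * x i = t

/-- The set of feasible target values in the interval `((j-1)·aₙ, j·aₙ]`. -/
def feasSet (n : ℕ) (a : Fin (n + 1) → ℕ) (j : ℕ) : Set ℕ :=
  {t : ℕ | t ∈ Set.Ioc ((j - 1) * a (Fin.last n)) (j * a (Fin.last n)) ∧ Feasible n a t}

/-! Adding `aₙ` to a feasible value keeps it feasible and moves it from the `j`-th interval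
into the `(j+1)`-st, injectively; hence `|A^(j)| ≤ |A^(j+1)|`. Every `A^(j)` lies in an interval
of `aₙ` integers, so once `|A^(j)| = aₙ` monotonicity pins all later cardinalities at `aₙ`. -/

theorem Feasible.add_coeff {n : ℕ} {a : Fin (n + 1) → ℕ} {t : ℕ} (h : Feasible n a t)
    (i : Fin (n + 1)) : Feasible n a (t + a i) := by
  classical
  obtain ⟨x, rfl⟩ := h
  refine ⟨x + Pi.single i 1, ?_⟩
  simp [mul_add, Finset.sum_add_distrib, Pi.single_apply]

theorem feasSet_subset_Ioc (n : ℕ) (a : Fin (n + 1) → ℕ) (j : ℕ) :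
    feasSet n a j ⊆ Set.Ioc ((j - 1) * a (Fin.last n)) (j * a (Fin.last n)) :=
  fun _ h => h.1

theorem feasSet_finite (n : ℕ) (a : Fin (n + 1) → ℕ) (j : ℕ) : (feasSet n a j).Finite :=
  (Set.finite_Ioc _ _).subset (feasSet_subset_Ioc n a j)

theorem ncard_feasSet_le (n : ℕ) (a : Fin (n + 1) → ℕ) (j : ℕ) :
    (feasSet n a j).ncard ≤ a (Fin.last n) := by
  calc (feasSet n a j).ncard
      ≤ (Set.Ioc ((j - 1) * a (Fin.last n)) (j * a (Fin.last n))).ncard :=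
        Set.ncard_le_ncard (feasSet_subset_Ioc n a j) (Set.finite_Ioc _ _)
    _ ≤ a (Fin.last n) := by
        rw [Set.ncard_eq_toFinset_card', Set.toFinset_Ioc, Nat.card_Ioc, Nat.sub_one_mul]
        omega

theorem image_add_last_feasSet_subset (n : ℕ) (a : Fin (n + 1) → ℕ) (j : ℕ) :
    (· + a (Fin.last n)) '' feasSet n a j ⊆ feasSet n a (j + 1) := by
  rintro _ ⟨t, ⟨⟨ht_gt, ht_le⟩, ht⟩, rfl⟩
  refine ⟨⟨?_, ?_⟩, ht.add_coeff _⟩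
  · rw [Nat.sub_one_mul] at ht_gt
    simp only [Nat.add_sub_cancel]
    omega
  · simp only [add_one_mul]
    omega

theorem monotone_ncard_feasSet (n : ℕ) (a : Fin (n + 1) → ℕ) :
    Monotone fun j => (feasSet n a j).ncard :=
  monotone_nat_of_le_succ fun j =>
    calc (feasSet n a j).ncard
        = ((· + a (Fin.last n)) '' feasSet n a j).ncard :=
          (Set.ncard_image_of_injective _ (add_left_injective _)).symm
      _ ≤ (feasSet n a (j + 1)).ncard :=
          Set.ncard_le_ncard (image_add_last_feasSet_subset n a j) (feasSet_finite n a _)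

theorem stmt_7_general (n : ℕ) (a : Fin (n + 1) → ℕ) :
    (∀ j k : ℕ, 1 ≤ j → j ≤ k → (feasSet n a j).ncard ≤ (feasSet n a k).ncard) ∧
    (∀ j k : ℕ, 1 ≤ j → j ≤ k → (feasSet n a j).ncard = a (Fin.last n) →
      (feasSet n a k).ncard = a (Fin.last n)) := by
  refine ⟨fun j k _ hjk => monotone_ncard_feasSet n a hjk, fun j k _ hjk hfull => ?_⟩
  exact le_antisymm (ncard_feasSet_le n a k) (hfull ▸ monotone_ncard_feasSet n a hjk)

theorem stmt_7 (n : ℕ) (a : Fin (n + 1) → ℕ) (hmono : StrictMono a) (hpos : 0 < a 0)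
    (hgcd : Finset.univ.gcd a = 1) :
    (∀ j k : ℕ, 1 ≤ j → j ≤ k → (feasSet n a j).ncard ≤ (feasSet n a k).ncard) ∧
    (∀ j k : ℕ, 1 ≤ j → j ≤ k → (feasSet n a j).ncard = a (Fin.last n) →
      (feasSet n a k).ncard = a (Fin.last n)) :=
  stmt_7_general n a
end

section
/- Let x ∈ ℤ_{≥0}^{n+1} be a solution of a_0 x_0 + ... + a_n x_n = t with t ≤ (i+j)·a_n for positive integers i, j, and with x ≠ 0. Then there exist x', x'' ∈ ℤ_{≥0}^{n+1} with x' + x'' + e_k = x for some standard unit vector e_k, such that a·x' ≤ i·a_n and a·x'' ≤ j·a_n (where a·y denotes a_0 y_0 + ... + a_n y_n). -/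
/-!
Greedy splitting: among the `y ≤ x` with `a ⬝ᵥ y ≤ B` pick one that is maximal for the pointwise
order. If `y = x`, remove any unit from `x`. Otherwise some `y + e_k` still lies below `x`, and by
maximality `a ⬝ᵥ (y + e_k) > B`; the remainder `x - (y + e_k)` then has weight `< C`.
-/

open Matrix

lemma Pi.single_le_iff {ι α : Type*} [DecidableEq ι] [AddZeroClass α] [PartialOrder α]
    [CanonicallyOrderedAdd α] {x : ι → α} {k : ι} {c : α} :
    Pi.single k c ≤ x ↔ c ≤ x k := by
  refine ⟨fun h => by simpa using h k, fun h m => ?_⟩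
  rcases eq_or_ne m k with rfl | hm
  · simpa using h
  · simp [hm]

section

variable {ι : Type*} [Fintype ι]

lemma exists_maximal_le_of_dotProduct_le (a x : ι → ℕ) (B : ℕ) :
    ∃ y ≤ x, a ⬝ᵥ y ≤ B ∧ ∀ z, y < z → z ≤ x → B < a ⬝ᵥ z := by
  classical
  obtain ⟨y, hy⟩ := ((Finset.Iic x).filter (a ⬝ᵥ · ≤ B)).exists_maximal ⟨0, by simp⟩
  simp only [Finset.mem_filter, Finset.mem_Iic] at hy
  refine ⟨y, hy.1.1, hy.1.2, fun z hyz hzx => ?_⟩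
  by_contra! hzB
  exact hy.not_gt ⟨hzx, hzB⟩ hyz

variable [DecidableEq ι]

theorem exists_add_add_single_eq_of_dotProduct_le_add {a x : ι → ℕ} {B C : ℕ}
    (hx : a ⬝ᵥ x ≤ B + C) (hx0 : x ≠ 0) :
    ∃ (x' x'' : ι → ℕ) (k : ι), x' + x'' + Pi.single k 1 = x ∧ a ⬝ᵥ x' ≤ B ∧ a ⬝ᵥ x'' ≤ C := by
  obtain ⟨y, hyx, hyB, hmax⟩ := exists_maximal_le_of_dotProduct_le a x B
  obtain rfl | hlt := hyx.eq_or_lt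
  · obtain ⟨k, hk⟩ := Function.ne_iff.mp hx0
    have hkx : Pi.single k 1 ≤ y := Pi.single_le_iff.mpr (Nat.one_le_iff_ne_zero.mpr hk)
    refine ⟨y - Pi.single k 1, 0, k, by rw [add_zero, tsub_add_cancel_of_le hkx], ?_, by simp⟩
    exact (dotProduct_le_dotProduct_of_nonneg_left tsub_le_self zero_le).trans hyB
  · obtain ⟨k, hk⟩ := (Pi.lt_def.mp hlt).2
    set z := y + Pi.single k 1
    have hzx : z ≤ x := fun m => by
      rcases eq_or_ne m k with rfl | hm
      · simpa [z] using hk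
      · simpa [z, hm] using hyx m
    have hyz : y < z := lt_add_of_pos_right y (Pi.lt_def.mpr ⟨zero_le, k, by simp⟩)
    have hzB := hmax z hyz hzx
    have hsplit : a ⬝ᵥ z + a ⬝ᵥ (x - z) = a ⬝ᵥ x := by
      rw [← dotProduct_add, add_tsub_cancel_of_le hzx]
    exact ⟨y, x - z, k, by rw [add_right_comm, add_tsub_cancel_of_le hzx], hyB, by omega⟩

end

theorem stmt_8_general (n : ℕ) (a : Fin (n + 1) → ℕ)
    (i j t : ℕ)
    (x : Fin (n + 1) → ℕ) (hx : ∑ k, a k * x k = t)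
    (ht : t ≤ (i + j) * a (Fin.last n)) (hx0 : x ≠ 0) :
    ∃ (x' x'' : Fin (n + 1) → ℕ) (k : Fin (n + 1)),
      x' + x'' + Pi.single k 1 = x ∧
      (∑ m, a m * x' m) ≤ i * a (Fin.last n) ∧
      (∑ m, a m * x'' m) ≤ j * a (Fin.last n) :=
  exists_add_add_single_eq_of_dotProduct_le_add ((hx.trans_le ht).trans_eq (add_mul _ _ _)) hx0

theorem stmt_8 (n : ℕ) (a : Fin (n + 1) → ℕ) (hmono : StrictMono a) (hpos : 0 < a 0)
    (i j t : ℕ) (hi : 1 ≤ i) (hj : 1 ≤ j)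
    (x : Fin (n + 1) → ℕ) (hx : ∑ k, a k * x k = t)
    (ht : t ≤ (i + j) * a (Fin.last n)) (hx0 : x ≠ 0) :
    ∃ (x' x'' : Fin (n + 1) → ℕ) (k : Fin (n + 1)),
      x' + x'' + Pi.single k 1 = x ∧
      (∑ m, a m * x' m) ≤ i * a (Fin.last n) ∧
      (∑ m, a m * x'' m) ≤ j * a (Fin.last n) :=
  stmt_8_general n a i j t x hx ht hx0
end

section
/- Let a_0 < a_1 < ... < a_n be positive integers with gcd 1. Define V = { 2^j · a_i : 1 ≤ i ≤ n, 0 ≤ j ≤ log₂(a_0) }. Then every minimal feasible target value t_k (the minimum nonnegative integer congruent to k mod a_0 that is a nonnegative integer combination of a_0, ..., a_n) can be written as a sum of at most ⌊log₂ a_0⌋ elements of V (with repetition allowed). -/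
/-!
Take a representation `x` of `t` (i.e. `a ⬝ᵥ x = t`) that is lexicographically minimal. If
`∏ i, (x i + 1) > a₀`, then by pigeonhole two distinct `y, z ≤ x` have `a ⬝ᵥ y ≡ a ⬝ᵥ z [MOD a₀]`.
Since `t` is least in its residue class, exchanging `y` for `z` inside `x` (or the reverse) cannot
lower the value, so `a ⬝ᵥ y = a ⬝ᵥ z` and both exchanges again represent `t`; one of them is
lexicographically smaller than `x`. Hence `∏ i, (x i + 1) ≤ a₀`, and for the same reason `x 0 = 0`.
Writing each `x i` in binary splits `x i * a i` into at most `log₂ (x i + 1)` terms `2 ^ j * a i`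
with `2 ^ j ≤ x i < a₀`, in total at most `log₂ a₀` terms.
-/

open Finset

theorem Nat.two_pow_length_bitIndices_le (n : ℕ) : 2 ^ n.bitIndices.length ≤ n + 1 := by
  induction n using Nat.binaryRec with
  | zero => simp
  | bit b n ih => cases b <;> simp [Nat.bit, pow_succ] <;> omega

section Feasible

variable {ι : Type*} [Fintype ι] {a : ι → ℕ} {m k t : ℕ} {x y z : ι → ℕ}

def feasibleWithResidue (a : ι → ℕ) (m k : ℕ) : Set ℕ :=
  {t | t % m = k ∧ ∃ x, a ⬝ᵥ x = t}

theorem dotProduct_le_of_modEq_of_isLeast (hmin : IsLeast (feasibleWithResidue a m k) t)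
    (hx : a ⬝ᵥ x = t) (hy : y ≤ x) (hyz : a ⬝ᵥ y ≡ a ⬝ᵥ z [MOD m]) : a ⬝ᵥ y ≤ a ⬝ᵥ z := by
  have hsplit : a ⬝ᵥ (x - y) + a ⬝ᵥ y = t := by
    rw [← dotProduct_add, tsub_add_cancel_of_le hy, hx]
  have hmod : a ⬝ᵥ (x - y + z) ≡ t [MOD m] := by
    rw [dotProduct_add, ← hsplit]
    exact hyz.symm.add_left _
  have := hmin.2 ⟨Eq.trans hmod hmin.1.1, _, rfl⟩
  rw [dotProduct_add] at this
  omega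

theorem dotProduct_eq_of_modEq_of_isLeast (hmin : IsLeast (feasibleWithResidue a m k) t)
    (hx : a ⬝ᵥ x = t) (hy : y ≤ x) (hz : z ≤ x) (hyz : a ⬝ᵥ y ≡ a ⬝ᵥ z [MOD m]) :
    a ⬝ᵥ y = a ⬝ᵥ z :=
  (dotProduct_le_of_modEq_of_isLeast hmin hx hy hyz).antisymm
    (dotProduct_le_of_modEq_of_isLeast hmin hx hz hyz.symm)

theorem eq_zero_of_dvd_of_isLeast [DecidableEq ι] (hmin : IsLeast (feasibleWithResidue a m k) t)
    (hx : a ⬝ᵥ x = t) {i : ι} (hdvd : m ∣ a i) (hpos : 0 < a i) : x i = 0 := by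
  have hle : Pi.single i (x i) ≤ x := fun j => by
    by_cases h : j = i
    · subst h; simp
    · simp [h]
  have hmod : a ⬝ᵥ Pi.single i (x i) ≡ a ⬝ᵥ 0 [MOD m] := by
    rw [dotProduct_single, dotProduct_zero]
    exact Nat.modEq_zero_iff_dvd.2 (dvd_mul_of_dvd_left hdvd _)
  have := dotProduct_le_of_modEq_of_isLeast hmin hx hle hmod
  rw [dotProduct_single, dotProduct_zero, nonpos_iff_eq_zero, mul_eq_zero] at this
  omega

theorem prod_add_one_le_of_isLeast_of_lexMinimal [LinearOrder ι]
    (hmin : IsLeast (feasibleWithResidue a m k) t) (hm : 0 < m) (hx : a ⬝ᵥ x = t)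
    (hlex : ∀ x', a ⬝ᵥ x' = t → toLex x ≤ toLex x') : ∏ i, (x i + 1) ≤ m := by
  have no_exchange : ∀ y ∈ Iic x, ∀ z ∈ Iic x, a ⬝ᵥ y % m = a ⬝ᵥ z % m → toLex y ≤ toLex z := by
    intro y hy z hz hyz
    by_contra! hlt
    rw [mem_Iic] at hy hz
    have hrep : a ⬝ᵥ (x - y + z) = t := by
      rw [dotProduct_add, ← dotProduct_eq_of_modEq_of_isLeast hmin hx hy hz hyz, ← dotProduct_add,
        tsub_add_cancel_of_le hy, hx]
    have hsmaller : toLex (x - y + z) < toLex x :=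
      calc toLex (x - y + z) = toLex (x - y) + toLex z := rfl
        _ < toLex (x - y) + toLex y := add_lt_add_right hlt _
        _ = toLex x := by rw [← toLex_add, tsub_add_cancel_of_le hy]
    exact (hlex _ hrep).not_gt hsmaller
  by_contra! hcard
  have : #(range m) < #(Iic x) := by simpa [Pi.card_Iic] using hcard
  obtain ⟨y, hy, z, hz, hne, hyz⟩ := exists_ne_map_eq_of_card_lt_of_maps_to this
    (f := fun y => a ⬝ᵥ y % m) fun y _ => by simpa using Nat.mod_lt _ hm
  exact hne (toLex.injective <| le_antisymm (no_exchange y hy z hz hyz) (no_exchange z hz y hy hyz.symm))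

theorem exists_dotProduct_eq_prod_add_one_le [LinearOrder ι]
    (hmin : IsLeast (feasibleWithResidue a m k) t) (hm : 0 < m) :
    ∃ x, a ⬝ᵥ x = t ∧ ∏ i, (x i + 1) ≤ m := by
  obtain ⟨x₀, hx₀⟩ := hmin.1.2
  obtain ⟨x, hx, hlex⟩ :=
    wellFounded_lt.has_min {w : Lex (ι → ℕ) | a ⬝ᵥ ofLex w = t} ⟨toLex x₀, hx₀⟩
  exact ⟨ofLex x, hx, prod_add_one_le_of_isLeast_of_lexMinimal hmin hm hx
    fun x' hx' => not_lt.1 (hlex (toLex x') hx')⟩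

end Feasible

theorem exists_list_sum_eq_dotProduct {ι : Type*} [Fintype ι] (a x : ι → ℕ) :
    ∃ l : List ℕ, (∀ v ∈ l, ∃ i j, 2 ^ j ≤ x i ∧ v = 2 ^ j * a i) ∧
      2 ^ l.length ≤ ∏ i, (x i + 1) ∧ l.sum = a ⬝ᵥ x := by
  refine ⟨(univ.toList.map fun i => (x i).bitIndices.map fun j => 2 ^ j * a i).flatten,
    ?_, ?_, ?_⟩
  · intro v hv
    obtain ⟨_, hl, hv⟩ := List.mem_flatten.1 hv
    obtain ⟨i, -, rfl⟩ := List.mem_map.1 hl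
    obtain ⟨j, hj, rfl⟩ := List.mem_map.1 hv
    exact ⟨i, j, Nat.two_pow_le_of_mem_bitIndices hj, rfl⟩
  · rw [List.length_flatten, List.map_map, sum_map_toList, ← prod_pow_eq_pow_sum]
    exact prod_le_prod' fun i _ => by simpa using Nat.two_pow_length_bitIndices_le (x i)
  · rw [List.sum_flatten, List.map_map, sum_map_toList, dotProduct]
    refine sum_congr rfl fun i _ => ?_
    rw [Function.comp_apply, List.sum_map_mul_right, Nat.sum_map_two_pow_bitIndices, mul_comm]

theorem stmt_11_general (n : ℕ) (a : Fin (n + 1) → ℕ) (hpos : 0 < a 0)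
    (k tk : ℕ)
    (hmin : IsLeast {t : ℕ | t % a 0 = k ∧ ∃ x : Fin (n + 1) → ℕ, ∑ i, a i * x i = t} tk) :
    ∃ l : List ℕ,
      (∀ v ∈ l, ∃ i : Fin (n + 1), i ≠ 0 ∧ ∃ j ≤ Nat.log 2 (a 0), v = 2 ^ j * a i) ∧
      l.length ≤ Nat.log 2 (a 0) ∧ l.sum = tk := by
  obtain ⟨x, hx, hprod⟩ := exists_dotProduct_eq_prod_add_one_le hmin hpos
  have hx0 : x 0 = 0 := eq_zero_of_dvd_of_isLeast hmin hx dvd_rfl hpos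
  obtain ⟨l, hmem, hlen, hsum⟩ := exists_list_sum_eq_dotProduct a x
  refine ⟨l, fun v hv => ?_, ?_, hsum.trans hx⟩
  · obtain ⟨i, j, hj, rfl⟩ := hmem v hv
    have hxi : x i + 1 ≤ a 0 :=
      (single_le_prod' (fun i _ => Nat.le_add_left 1 (x i)) (mem_univ i)).trans hprod
    refine ⟨i, ?_, j, ?_, rfl⟩
    · rintro rfl
      exact (Nat.two_pow_pos j).ne' (Nat.le_zero.1 (hx0 ▸ hj))
    · rw [Nat.le_log_iff_pow_le one_lt_two hpos.ne']
      omega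
  · rw [Nat.le_log_iff_pow_le one_lt_two hpos.ne']
    exact hlen.trans hprod

theorem stmt_11 (n : ℕ) (a : Fin (n + 1) → ℕ) (hmono : StrictMono a) (hpos : 0 < a 0)
    (hgcd : Finset.univ.gcd a = 1)
    (k tk : ℕ) (hk : k < a 0)
    (hmin : IsLeast {t : ℕ | t % a 0 = k ∧ ∃ x : Fin (n + 1) → ℕ, ∑ i, a i * x i = t} tk) :
    ∃ l : List ℕ,
      (∀ v ∈ l, ∃ i : Fin (n + 1), i ≠ 0 ∧ ∃ j ≤ Nat.log 2 (a 0), v = 2 ^ j * a i) ∧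
      l.length ≤ Nat.log 2 (a 0) ∧ l.sum = tk :=
  stmt_11_general n a hpos k tk hmin
end

section
/- Let (a[i])_{i=0}^{n−1} be a sequence of integers and define b of length 2n by b[i] = a[i mod n]. Then there exist indices i, j ∈ {0,...,2n−1} with i+j ≤ 2n−1 and b[i] + b[j] < b[i+j] if and only if there exist indices i, j ∈ {0,...,n−1} with a[i] + a[j] < a[(i+j) mod n]. -/
theorem stmt_12_general (n : ℕ) (a : ℕ → ℤ) (b : ℕ → ℤ)
    (hb : ∀ i < 2 * n, b i = a (i % n)) :
    (∃ i j : ℕ, i < 2 * n ∧ j < 2 * n ∧ i + j ≤ 2 * n - 1 ∧ b i + b j < b (i + j)) ↔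
    (∃ i j : ℕ, i < n ∧ j < n ∧ a i + a j < a ((i + j) % n)) := by
  constructor
  · rintro ⟨i, j, hi, hj, hij, hlt⟩
    have hn : 0 < n := by omega
    refine ⟨i % n, j % n, Nat.mod_lt i hn, Nat.mod_lt j hn, ?_⟩
    rwa [← Nat.add_mod, ← hb i hi, ← hb j hj, ← hb (i + j) (by omega)]
  · rintro ⟨i, j, hi, hj, hlt⟩
    refine ⟨i, j, by omega, by omega, by omega, ?_⟩
    rwa [hb i (by omega), hb j (by omega), hb (i + j) (by omega),
      Nat.mod_eq_of_lt hi, Nat.mod_eq_of_lt hj]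

theorem stmt_12 (n : ℕ) (hn : 1 ≤ n) (a : ℕ → ℤ) (b : ℕ → ℤ)
    (hb : ∀ i < 2 * n, b i = a (i % n)) :
    (∃ i j : ℕ, i < 2 * n ∧ j < 2 * n ∧ i + j ≤ 2 * n - 1 ∧ b i + b j < b (i + j)) ↔
    (∃ i j : ℕ, i < n ∧ j < n ∧ a i + a j < a ((i + j) % n)) :=
  stmt_12_general n a b hb
end

section
/- Given a sequence a[1], ..., a[n−1] of positive integers, define a_0 = 2n, M = 2(max_i a[i] + n), items a_i = a_0·a[i] + 2i and ā_i = a_0·(M − a[i]) − 2i − 1 for 1 ≤ i ≤ n−1, and target t = a_0(M−1) − 1. Then any nonnegative integer combination of {a_0} ∪ {a_i} ∪ {ā_i} equal to t must use exactly one item from {ā_1, ..., ā_{n−1}}. -/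
/-!
Every item except the `ā_i` is even, while the `ā_i` and the target are odd, so a representation
of the target uses an odd number of the `ā_i`. Each `ā_i` exceeds half the target, so it uses
fewer than two of them, hence exactly one.
-/

open Finset

theorem odd_sum_of_odd_sum_mul {ι : Type*} {s : Finset ι} {y b : ι → ℕ}
    (hb : ∀ i ∈ s, Odd (b i)) (h : Odd (∑ i ∈ s, y i * b i)) : Odd (∑ i ∈ s, y i) := by
  rw [← ZMod.natCast_eq_one_iff_odd] at h ⊢
  rw [← h]
  push_cast
  refine sum_congr rfl fun i hi => ?_
  rw [ZMod.natCast_eq_one_iff_odd.2 (hb i hi), mul_one]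

theorem sum_lt_two_of_sum_mul_le {ι : Type*} {s : Finset ι} {y b : ι → ℕ} {t : ℕ}
    (hb : ∀ i ∈ s, t < 2 * b i) (h : ∑ i ∈ s, y i * b i ≤ t) : ∑ i ∈ s, y i < 2 := by
  by_contra! hy
  have hL : ∀ i ∈ s, t / 2 + 1 ≤ b i := fun i hi => by have := hb i hi; omega
  have : 2 * (t / 2 + 1) ≤ ∑ i ∈ s, y i * b i :=
    calc 2 * (t / 2 + 1) ≤ (∑ i ∈ s, y i) * (t / 2 + 1) := Nat.mul_le_mul_right _ hy
      _ = ∑ i ∈ s, y i * (t / 2 + 1) := sum_mul ..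
      _ ≤ ∑ i ∈ s, y i * b i := sum_le_sum fun i hi => Nat.mul_le_mul_left _ (hL i hi)
  omega

/-- Observation 1, abstractly: `E` collects the even items, the `b i` are the odd ones. -/
theorem sum_eq_one_of_even_add_sum_mul_eq_odd {ι : Type*} {s : Finset ι} {y b : ι → ℕ}
    {E t : ℕ} (hE : Even E) (ht : Odd t) (hb : ∀ i ∈ s, Odd (b i))
    (hbt : ∀ i ∈ s, t < 2 * b i) (h : E + ∑ i ∈ s, y i * b i = t) : ∑ i ∈ s, y i = 1 := by
  have hodd : Odd (∑ i ∈ s, y i * b i) := by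
    rw [← h, Nat.odd_add'] at ht
    exact ht.2 hE
  have hlt := sum_lt_two_of_sum_mul_le hbt (h ▸ Nat.le_add_left _ E)
  have hsum_odd := Nat.odd_iff.1 (odd_sum_of_odd_sum_mul hb hodd)
  omega

theorem odd_two_mul_sub_one {k : ℕ} (hk : 0 < k) : Odd (2 * k - 1) :=
  Nat.Even.sub_odd (by omega) (even_two_mul k) odd_one

/-- With `m = M - a i ≥ A + 2n`, this is `t < 2 ā_i`. -/
theorem sub_one_lt_two_mul_sub {n A M m i : ℕ} (hM : M = 2 * (A + n)) (hi : i < n)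
    (hm : A + 2 * n ≤ m) : 2 * n * (M - 1) - 1 < 2 * (2 * n * m - 2 * i - 1) := by
  have hnm : n * (A + 2 * n) ≤ n * m := Nat.mul_le_mul_left n hm
  have hM1 : n * (M - 1) + n = n * (2 * A + 2 * n) := by
    rw [← Nat.mul_succ]; congr 1; omega
  have hnn : n ≤ n * n := Nat.le_mul_self n
  have : n * (A + 2 * n) = n * A + 2 * (n * n) := by ring
  have : n * (2 * A + 2 * n) = 2 * (n * A) + 2 * (n * n) := by ring
  rw [mul_assoc, mul_assoc]
  omega

theorem stmt_13_general (n : ℕ) (hn : 2 ≤ n) (a : ℕ → ℕ)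
    (M : ℕ) (hM : M = 2 * ((Finset.Icc 1 (n - 1)).sup a + n))
    (x0 : ℕ) (x y : ℕ → ℕ)
    (heq :
      x0 * (2 * n) +
        (∑ i ∈ Finset.Icc 1 (n - 1), x i * (2 * n * a i + 2 * i)) +
        (∑ i ∈ Finset.Icc 1 (n - 1), y i * (2 * n * (M - a i) - 2 * i - 1)) =
      2 * n * (M - 1) - 1) :
    ∑ i ∈ Finset.Icc 1 (n - 1), y i = 1 := by
  set A := (Icc 1 (n - 1)).sup a
  refine sum_eq_one_of_even_add_sum_mul_eq_odd ?_ ?_ (fun i hi => ?_) (fun i hi => ?_) heq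
  · refine ((even_two.mul_right n).mul_left x0).add (even_sum _ fun i _ => ?_)
    exact (((even_two.mul_right n).mul_right (a i)).add (even_two.mul_right i)).mul_left (x i)
  · rw [mul_assoc]
    exact odd_two_mul_sub_one (Nat.mul_pos (by omega) (by omega))
  · have hai : a i ≤ A := le_sup hi
    have hi : i ≤ n - 1 := (mem_Icc.1 hi).2
    have hn_le : n * 1 ≤ n * (M - a i) := Nat.mul_le_mul_left n (by omega)
    rw [mul_assoc, ← Nat.mul_sub]
    exact odd_two_mul_sub_one (by omega)
  · have hai : a i ≤ A := le_sup hi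
    have hi : i ≤ n - 1 := (mem_Icc.1 hi).2
    exact sub_one_lt_two_mul_sub hM (by omega) (by omega)

theorem stmt_13 (n : ℕ) (hn : 2 ≤ n) (a : ℕ → ℕ)
    (hpos : ∀ i ∈ Finset.Icc 1 (n - 1), 0 < a i)
    (M : ℕ) (hM : M = 2 * ((Finset.Icc 1 (n - 1)).sup a + n))
    (x0 : ℕ) (x y : ℕ → ℕ)
    (heq :
      x0 * (2 * n) +
        (∑ i ∈ Finset.Icc 1 (n - 1), x i * (2 * n * a i + 2 * i)) +
        (∑ i ∈ Finset.Icc 1 (n - 1), y i * (2 * n * (M - a i) - 2 * i - 1)) =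
      2 * n * (M - 1) - 1) :
    ∑ i ∈ Finset.Icc 1 (n - 1), y i = 1 :=
  stmt_13_general n hn a M hM x0 x y heq
end

section
/- Let a_0 < a_1 < ... < a_n be positive integers with gcd 1, all at most t, and let R be the smallest integer with R·a_0 > t. Add the items a_{n+i} = R·a_0 + (2^i mod a_0) for 0 ≤ i ≤ ⌊log₂ a_0⌋. Then every integer t' > 3t·log₂ t is representable as a nonnegative integer combination of the extended item set; in particular the Frobenius number of the extended instance is at most 3t·log₂ t. -/
/-!
Write `m = t' % a₀ = ∑ bᵢ 2ⁱ` in binary and take the added items with `bᵢ = 1`: their sum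
`S` is `≡ m ≡ t' (mod a₀)`. There are at most `log₂ m + 1` of them and `R a₀ ≤ t + a₀`, so
`S ≤ (log₂ m + 1)(t + a₀) + m`. When `m ≠ 0`, `a₀ ≥ 2` and the gcd condition forces
`a₀ < a₁ ≤ t`, whence `S ≤ (2 log₂ m + 3) t ≤ 3 t log₂ t < t'`. The remainder `t' - S` is a
multiple of `a₀`.
-/

open Finset

namespace Nat

theorem sum_range_div_two_pow_mod_two_mul (m K : ℕ) :
    ∑ i ∈ range K, m / 2 ^ i % 2 * 2 ^ i = m % 2 ^ K := by
  induction K with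
  | zero => simp [Nat.mod_one]
  | succ K ih =>
    rw [sum_range_succ, ih, pow_succ, Nat.mod_mul]
    ring

theorem sum_div_two_pow_mod_two_le_log (m : ℕ) (s : Finset ℕ) :
    ∑ i ∈ s, m / 2 ^ i % 2 ≤ log 2 m + 1 := by
  calc ∑ i ∈ s, m / 2 ^ i % 2
      ≤ ∑ i ∈ range (log 2 m + 1), m / 2 ^ i % 2 := by
        refine sum_le_sum_of_ne_zero fun i _ hi => mem_range.2 ?_
        by_contra! hlog
        have : m < 2 ^ i :=
          (lt_pow_succ_log_self one_lt_two m).trans_le (pow_le_pow_right₀ one_le_two hlog)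
        simp [Nat.div_eq_of_lt this] at hi
    _ ≤ #(range (log 2 m + 1)) • 1 :=
        sum_le_card_nsmul _ _ _ fun i _ => le_of_lt_succ (mod_lt _ two_pos)
    _ = log 2 m + 1 := by simp

end Nat

section Binary

variable {a c m K : ℕ}

theorem sum_bits_mul_modEq (hm : m < 2 ^ K) :
    ∑ i ∈ range K, m / 2 ^ i % 2 * (c * a + 2 ^ i % a) ≡ m [MOD a] := by
  conv_rhs => rw [← Nat.mod_eq_of_lt hm, ← Nat.sum_range_div_two_pow_mod_two_mul]
  refine Nat.ModEq.sum fun i _ => Nat.ModEq.mul_left _ ?_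
  calc c * a + 2 ^ i % a ≡ 0 + 2 ^ i % a [MOD a] :=
        Nat.ModEq.add_right _ (Nat.modEq_zero_iff_dvd.2 (dvd_mul_left a c))
    _ ≡ 2 ^ i [MOD a] := by rw [zero_add]; exact Nat.mod_modEq _ _

theorem sum_bits_mul_le (hm : m < 2 ^ K) (C : ℕ) :
    ∑ i ∈ range K, m / 2 ^ i % 2 * (C + 2 ^ i % a) ≤ (Nat.log 2 m + 1) * C + m := by
  calc ∑ i ∈ range K, m / 2 ^ i % 2 * (C + 2 ^ i % a)
      ≤ ∑ i ∈ range K, (m / 2 ^ i % 2 * C + m / 2 ^ i % 2 * 2 ^ i) :=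
        sum_le_sum fun i _ => by rw [← mul_add]; gcongr; exact Nat.mod_le _ _
    _ = (∑ i ∈ range K, m / 2 ^ i % 2) * C + m := by
        rw [sum_add_distrib, ← sum_mul, Nat.sum_range_div_two_pow_mod_two_mul,
          Nat.mod_eq_of_lt hm]
    _ ≤ (Nat.log 2 m + 1) * C + m := by
        gcongr; exact Nat.sum_div_two_pow_mod_two_le_log m _

end Binary

theorem exists_sum_mul_add_eq_of_modEq {ι : Type*} [Fintype ι] [DecidableEq ι]
    (a : ι → ℕ) (i₀ : ι) {S t : ℕ} (hle : S ≤ t) (hmod : S ≡ t [MOD a i₀]) :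
    ∃ x : ι → ℕ, ∑ i, a i * x i + S = t := by
  obtain ⟨q, hq⟩ := (Nat.modEq_iff_dvd' hle).1 hmod
  refine ⟨Pi.single i₀ q, ?_⟩
  have : ∑ i, a i * (Pi.single i₀ q : ι → ℕ) i = a i₀ * q := by
    simp [Pi.single_apply]
  omega

theorem mul_le_add_of_forall_lt_mul {R a t : ℕ} (hmin : ∀ R' : ℕ, t < R' * a → R ≤ R') :
    R * a ≤ t + a := by
  rcases R with _ | R
  · simp
  · have : R * a ≤ t := by
      by_contra! h
      exact absurd (hmin R h) (by omega)
    rw [add_one_mul]; omega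

theorem apply_zero_lt_apply_one_of_gcd_eq_one {n : ℕ} {a : Fin (n + 1) → ℕ}
    (hmono : StrictMono a) (hgcd : univ.gcd a = 1) (ha : a 0 ≠ 1) : a 0 < a 1 := by
  rcases n with _ | n
  · rw [show (univ : Finset (Fin (0 + 1))) = {0} from rfl, gcd_singleton, normalize_eq] at hgcd
    exact absurd hgcd ha
  · exact hmono Fin.zero_lt_one

theorem two_mul_add_three_le_three_mul_logb {p t : ℕ} (h : 2 ^ p + 2 ≤ t) :
    (2 * p + 3 : ℝ) ≤ 3 * Real.logb 2 t := by
  have hnat : 2 ^ (2 * p + 3) ≤ t ^ 3 :=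
    calc 2 ^ (2 * p + 3) = 8 * (2 ^ p) ^ 2 := by ring
      _ ≤ (2 ^ p + 2) ^ 3 := by nlinarith [Nat.one_le_two_pow (n := p)]
      _ ≤ t ^ 3 := Nat.pow_le_pow_left h 3
  have hreal : Real.logb 2 ((2 : ℝ) ^ (2 * p + 3)) ≤ Real.logb 2 ((t : ℝ) ^ 3) :=
    Real.logb_le_logb_of_le one_lt_two (by positivity) (by exact_mod_cast hnat)
  rw [Real.logb_pow, Real.logb_pow, Real.logb_self_eq_one one_lt_two] at hreal
  push_cast at hreal
  linarith

theorem stmt_16_general (n : ℕ) (a : Fin (n + 1) → ℕ) (t : ℕ)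
    (hmono : StrictMono a) (hpos : 0 < a 0) (hgcd : Finset.univ.gcd a = 1)
    (hle : ∀ i, a i ≤ t)
    (R : ℕ) (hRmin : ∀ R' : ℕ, t < R' * a 0 → R ≤ R')
    (t' : ℕ) (ht' : (3 * t : ℝ) * Real.logb 2 t < t') :
    ∃ (x : Fin (n + 1) → ℕ) (y : ℕ → ℕ),
      (∑ i, a i * x i) +
        (∑ i ∈ Finset.range (Nat.log 2 (a 0) + 1), y i * (R * a 0 + 2 ^ i % a 0)) =
      t' := by
  set m := t' % a 0
  have hm : m < a 0 := Nat.mod_lt _ hpos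
  have hmK : m < 2 ^ (Nat.log 2 (a 0) + 1) := hm.trans (Nat.lt_pow_succ_log_self one_lt_two _)
  set S := ∑ i ∈ range (Nat.log 2 (a 0) + 1), m / 2 ^ i % 2 * (R * a 0 + 2 ^ i % a 0)
  have hmod : S ≡ t' [MOD a 0] := (sum_bits_mul_modEq hmK).trans (Nat.mod_modEq _ _)
  have hS : S ≤ t' := by
    rcases eq_or_ne m 0 with hm0 | hm0
    · simp [S, hm0]
    have ha0 : a 0 < t :=
      (apply_zero_lt_apply_one_of_gcd_eq_one hmono hgcd (by omega)).trans_le (hle 1)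
    have hSt : S ≤ (2 * Nat.log 2 m + 3) * t := calc
      S ≤ (Nat.log 2 m + 1) * (R * a 0) + m := sum_bits_mul_le hmK _
      _ ≤ (Nat.log 2 m + 1) * (t + t) + t := by
        gcongr
        · exact (mul_le_add_of_forall_lt_mul hRmin).trans (by omega)
        · omega
      _ = (2 * Nat.log 2 m + 3) * t := by ring
    have hlog := two_mul_add_three_le_three_mul_logb (p := Nat.log 2 m) (t := t)
      (by have := Nat.pow_log_le_self 2 hm0; omega)
    have : (S : ℝ) < t' := calc
      (S : ℝ) ≤ (2 * Nat.log 2 m + 3) * t := by exact_mod_cast hSt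
      _ ≤ 3 * Real.logb 2 t * t := by gcongr
      _ < t' := by linarith
    exact_mod_cast this.le
  obtain ⟨x, hx⟩ := exists_sum_mul_add_eq_of_modEq a 0 hS hmod
  exact ⟨x, fun i => m / 2 ^ i % 2, hx⟩

theorem stmt_16 (n : ℕ) (a : Fin (n + 1) → ℕ) (t : ℕ)
    (hmono : StrictMono a) (hpos : 0 < a 0) (hgcd : Finset.univ.gcd a = 1)
    (hle : ∀ i, a i ≤ t)
    (R : ℕ) (hR : t < R * a 0) (hRmin : ∀ R' : ℕ, t < R' * a 0 → R ≤ R')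
    (t' : ℕ) (ht' : (3 * t : ℝ) * Real.logb 2 t < t') :
    ∃ (x : Fin (n + 1) → ℕ) (y : ℕ → ℕ),
      (∑ i, a i * x i) +
        (∑ i ∈ Finset.range (Nat.log 2 (a 0) + 1), y i * (R * a 0 + 2 ^ i % a 0)) =
      t' :=
  stmt_16_general n a t hmono hpos hgcd hle R hRmin t' ht'
end
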